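/- The implementation relation between algorithms is transitive through glueing: if an algorithm B is obtained as the glueing of an algorithm A along a map φ from the labels of A to algorithms, and a program P implements B (i.e., P is the glueing of B along some map ψ from the labels of B to programs), then P implements A (i.e., P is the glueing of A along some map from the labels of A to programs). -/

import Mathlib

universe u

/-- A labelled graph with control states: a directed graph with edges labelled in `L`
and distinguished initial and terminal vertices.  Syntactic algorithms and programs
are both of this shape. -/
structure LGraph (L : Type u) : Type (u + 1) where
  V : Type u
  E : Type u
  src : E → V
  tgt : E → V
  lab : E → L
  init : V
  term : V

namespace LGraph

variable {L L' L'' : Type u}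

/-- The identifications performed by the glueing: for each edge `e` of `A`, the
initial (resp. terminal) vertex of the copy of `φ (lab e)` attached to `e` is
identified with the source (resp. target) of `e`. -/
def glueRel (A : LGraph L) (φ : L → LGraph L') :
    (A.V ⊕ Σ e : A.E, (φ (A.lab e)).V) → (A.V ⊕ Σ e : A.E, (φ (A.lab e)).V) → Prop :=
  fun w w' =>
    match w, w' with
    | Sum.inl v, Sum.inr ⟨e, u⟩ =>
        (A.src e = v ∧ u = (φ (A.lab e)).init) ∨ (A.tgt e = v ∧ u = (φ (A.lab e)).term)
    | _, _ => False

/-- The glueing of the family `φ` along `A`: each edge `e` of `A` is replaced by a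
disjoint copy of `φ (lab e)`, identifying for each vertex `v` of `A` the initial
vertices of the copies attached to edges with source `v` and the terminal vertices
of the copies attached to edges with target `v`. -/
def glue (A : LGraph L) (φ : L → LGraph L') : LGraph L' where
  V := Quot (glueRel A φ)
  E := Σ e : A.E, (φ (A.lab e)).E
  src f := Quot.mk _ (Sum.inr ⟨f.1, (φ (A.lab f.1)).src f.2⟩)
  tgt f := Quot.mk _ (Sum.inr ⟨f.1, (φ (A.lab f.1)).tgt f.2⟩)
  lab f := (φ (A.lab f.1)).lab f.2
  init := Quot.mk _ (Sum.inl A.init)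
  term := Quot.mk _ (Sum.inl A.term)

/-- Isomorphism of labelled graphs with control states. -/
structure Iso (G H : LGraph L) : Type u where
  vEquiv : G.V ≃ H.V
  eEquiv : G.E ≃ H.E
  src_eq : ∀ e, H.src (eEquiv e) = vEquiv (G.src e)
  tgt_eq : ∀ e, H.tgt (eEquiv e) = vEquiv (G.tgt e)
  lab_eq : ∀ e, H.lab (eEquiv e) = G.lab e
  init_eq : vEquiv G.init = H.init
  term_eq : vEquiv G.term = H.term

/-- A program `P` implements the algorithm `A` when `P` is (isomorphic to) the
glueing of some family of programs along `A`. -/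
def Implements (P : LGraph L'') (A : LGraph L) : Prop :=
  ∃ ψ : L → LGraph L'', Nonempty (Iso P (A.glue ψ))

/-! Glueing is associative up to isomorphism, `glue (glue A φ) ψ ≅ glue A (fun l => glue (φ l) ψ)`,
so a glueing along `glue A φ` is also a glueing along `A`. Both sides have as edges the edges of
the `ψ`-copies attached to an edge `f` of the `φ`-copy attached to an edge `e` of `A`; on vertices,
both quotients are generated by the same two layers of identifications (ends of `e` with the
control states of its `φ`-copy, ends of `f` with those of its `ψ`-copy), taken in opposite orders. -/

def Iso.trans {G H K : LGraph L} (i : Iso G H) (j : Iso H K) : Iso G K where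
  vEquiv := i.vEquiv.trans j.vEquiv
  eEquiv := i.eEquiv.trans j.eEquiv
  src_eq e := by simp [j.src_eq, i.src_eq]
  tgt_eq e := by simp [j.tgt_eq, i.tgt_eq]
  lab_eq e := by simp [j.lab_eq, i.lab_eq]
  init_eq := by simp [i.init_eq, j.init_eq]
  term_eq := by simp [i.term_eq, j.term_eq]

section Glue

variable (A : LGraph L) (φ : L → LGraph L')

theorem glue_mk_src (e : A.E) :
    (Quot.mk _ (Sum.inl (A.src e)) : (A.glue φ).V) = Quot.mk _ (Sum.inr ⟨e, (φ (A.lab e)).init⟩) :=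
  Quot.sound (Or.inl ⟨rfl, rfl⟩)

theorem glue_mk_tgt (e : A.E) :
    (Quot.mk _ (Sum.inl (A.tgt e)) : (A.glue φ).V) = Quot.mk _ (Sum.inr ⟨e, (φ (A.lab e)).term⟩) :=
  Quot.sound (Or.inr ⟨rfl, rfl⟩)

end Glue

section Assoc

variable (A : LGraph L) (φ : L → LGraph L') (ψ : L' → LGraph L'')

def glueAssocVFunInl : (A.glue φ).V → (A.glue (fun l => (φ l).glue ψ)).V :=
  Quot.lift
    (fun
      | Sum.inl v => Quot.mk _ (Sum.inl v)
      | Sum.inr ⟨e, u⟩ => Quot.mk _ (Sum.inr ⟨e, Quot.mk _ (Sum.inl u)⟩))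
    (by
      rintro (v | ⟨e, u⟩) (v' | ⟨e', u'⟩) (⟨rfl, rfl⟩ | ⟨rfl, rfl⟩)
      · exact glue_mk_src A _ e'
      · exact glue_mk_tgt A _ e')

def glueAssocVFun : ((A.glue φ).glue ψ).V → (A.glue (fun l => (φ l).glue ψ)).V :=
  Quot.lift
    (fun
      | Sum.inl q => glueAssocVFunInl A φ ψ q
      | Sum.inr ⟨⟨e, f⟩, w⟩ => Quot.mk _ (Sum.inr ⟨e, Quot.mk _ (Sum.inr ⟨f, w⟩)⟩))
    (by
      rintro (q | ⟨⟨e, f⟩, w⟩) (q' | ⟨⟨e', f'⟩, w'⟩) (⟨rfl, rfl⟩ | ⟨rfl, rfl⟩)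
      · exact congrArg (fun u => (Quot.mk _ (Sum.inr ⟨e', u⟩) : (A.glue fun l => (φ l).glue ψ).V))
          (glue_mk_src _ ψ f')
      · exact congrArg (fun u => (Quot.mk _ (Sum.inr ⟨e', u⟩) : (A.glue fun l => (φ l).glue ψ).V))
          (glue_mk_tgt _ ψ f'))

def glueAssocVInvFunInr (e : A.E) : ((φ (A.lab e)).glue ψ).V → ((A.glue φ).glue ψ).V :=
  Quot.lift
    (fun
      | Sum.inl u => Quot.mk _ (Sum.inl (Quot.mk _ (Sum.inr ⟨e, u⟩)))
      | Sum.inr ⟨f, w⟩ => Quot.mk _ (Sum.inr ⟨⟨e, f⟩, w⟩))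
    (by
      rintro (u | ⟨f, w⟩) (u' | ⟨f', w'⟩) (⟨rfl, rfl⟩ | ⟨rfl, rfl⟩)
      · exact glue_mk_src (A.glue φ) ψ ⟨e, f'⟩
      · exact glue_mk_tgt (A.glue φ) ψ ⟨e, f'⟩)

def glueAssocVInvFun : (A.glue (fun l => (φ l).glue ψ)).V → ((A.glue φ).glue ψ).V :=
  Quot.lift
    (fun
      | Sum.inl v => Quot.mk _ (Sum.inl (Quot.mk _ (Sum.inl v)))
      | Sum.inr ⟨e, q⟩ => glueAssocVInvFunInr A φ ψ e q)
    (by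
      rintro (v | ⟨e, q⟩) (v' | ⟨e', q'⟩) (⟨rfl, rfl⟩ | ⟨rfl, rfl⟩)
      · exact congrArg (fun q => Quot.mk _ (Sum.inl q)) (glue_mk_src A φ e')
      · exact congrArg (fun q => Quot.mk _ (Sum.inl q)) (glue_mk_tgt A φ e'))

def glueAssocVEquiv : ((A.glue φ).glue ψ).V ≃ (A.glue (fun l => (φ l).glue ψ)).V where
  toFun := glueAssocVFun A φ ψ
  invFun := glueAssocVInvFun A φ ψ
  left_inv := by
    rintro ⟨q | ⟨⟨e, f⟩, w⟩⟩
    · induction q using Quot.ind with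
      | mk w => rcases w with v | ⟨e, u⟩ <;> rfl
    · rfl
  right_inv := by
    rintro ⟨v | ⟨e, q⟩⟩
    · rfl
    · induction q using Quot.ind with
      | mk w => rcases w with u | ⟨f, w⟩ <;> rfl

def glueAssoc : Iso ((A.glue φ).glue ψ) (A.glue (fun l => (φ l).glue ψ)) where
  vEquiv := glueAssocVEquiv A φ ψ
  eEquiv := Equiv.sigmaAssoc fun e f => (ψ ((φ (A.lab e)).lab f)).E
  src_eq _ := rfl
  tgt_eq _ := rfl
  lab_eq _ := rfl
  init_eq := rfl
  term_eq := rfl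

end Assoc

/-- Transitivity of implementation through glueing: if the algorithm `B` is obtained
by glueing the algorithms `φ` along `A`, and the program `P` implements `B` (i.e.
`P` is the glueing of `B` along some family `ψ` of programs), then `P` implements
`A` (i.e. `P` is the glueing of `A` along some family of programs) — because
glueing composes: `glue (glue A φ) ψ ≅ glue A (fun l => glue (φ l) ψ)`. -/
theorem implements_of_glue (A : LGraph L) (φ : L → LGraph L') (P : LGraph L'')
    (h : Implements P (A.glue φ)) : Implements P A := by
  obtain ⟨ψ, ⟨i⟩⟩ := h
  exact ⟨fun l => (φ l).glue ψ, ⟨i.trans (glueAssoc A φ ψ)⟩⟩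

end LGraph
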